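/- Let L be a natural number, l < L, and ω, x be real numbers. Then there exists an integer n such that |sin(ω·sin(2^l·π·x)) − sin(ω·sin(2^l·π·(n/2^L)))| ≤ |ω|·2^l·π/2^(L+1). That is, each SPE coordinate of frequency index l is determined, up to an error that decreases geometrically in L − l, by the dyadic approximation of the input x at resolution 1/2^L. -/

import Mathlib

open Real


lemma sin_lip (a b : ℝ) : |Real.sin a - Real.sin b| ≤ |a - b| := by
  rw [Real.sin_sub_sin, abs_mul, abs_mul]
  calc |(2:ℝ)| * |Real.sin ((a - b) / 2)| * |Real.cos ((a + b) / 2)|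
      ≤ |(2:ℝ)| * |(a - b) / 2| * 1 := by
        apply mul_le_mul (mul_le_mul_of_nonneg_left (Real.abs_sin_le_abs) (abs_nonneg _))
          (Real.abs_cos_le_one _) (abs_nonneg _) (by positivity)
    _ = |a - b| := by rw [abs_div]; simp [abs_of_pos]; ring

/-- Each SPE coordinate of frequency index `l < L` is determined, up to error
`|ω| * 2^l * π / 2^(L+1)`, by the dyadic approximation of the input at resolution
`1 / 2^L`. -/
theorem spe_coordinate_dyadic_resolution (L l : ℕ) (hl : l < L) (ω x : ℝ) :
    ∃ n : ℤ,
      |Real.sin (ω * Real.sin (2 ^ l * π * x)) -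
          Real.sin (ω * Real.sin (2 ^ l * π * ((n : ℝ) / 2 ^ L)))| ≤
        |ω| * 2 ^ l * π / 2 ^ (L + 1) := by
  refine ⟨round ((2 : ℝ) ^ L * x), ?_⟩
  set n : ℤ := round ((2 : ℝ) ^ L * x)
  have hx : |x - (n : ℝ) / 2 ^ L| ≤ 1 / 2 ^ (L + 1) := by
    have h := abs_sub_round ((2 : ℝ) ^ L * x)
    have h2 : (0 : ℝ) < 2 ^ L := by positivity
    have : |x - (n : ℝ) / 2 ^ L| = |(2 : ℝ) ^ L * x - n| / 2 ^ L := by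
      rw [← abs_of_pos h2, ← abs_div]
      congr 1
      field_simp; rw [abs_of_pos h2]
    rw [this, pow_succ]
    rw [div_le_div_iff₀ h2 (by positivity)]
    calc |(2:ℝ) ^ L * x - n| * (2 ^ L * 2) ≤ (1/2) * (2 ^ L * 2) := by
          exact mul_le_mul_of_nonneg_right h (by positivity)
      _ = 1 * 2 ^ L := by ring
  calc |Real.sin (ω * Real.sin (2 ^ l * π * x)) -
          Real.sin (ω * Real.sin (2 ^ l * π * ((n : ℝ) / 2 ^ L)))|
      ≤ |ω * Real.sin (2 ^ l * π * x) - ω * Real.sin (2 ^ l * π * ((n : ℝ) / 2 ^ L))| :=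
        sin_lip _ _
    _ = |ω| * |Real.sin (2 ^ l * π * x) - Real.sin (2 ^ l * π * ((n : ℝ) / 2 ^ L))| := by
        rw [← mul_sub, abs_mul]
    _ ≤ |ω| * |2 ^ l * π * x - 2 ^ l * π * ((n : ℝ) / 2 ^ L)| := by
        exact mul_le_mul_of_nonneg_left (sin_lip _ _) (abs_nonneg _)
    _ = |ω| * (2 ^ l * π * |x - (n : ℝ) / 2 ^ L|) := by
        rw [← mul_sub, abs_mul, abs_of_pos (by positivity : (0:ℝ) < 2 ^ l * π)]
    _ ≤ |ω| * (2 ^ l * π * (1 / 2 ^ (L + 1))) := by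
        exact mul_le_mul_of_nonneg_left
          (mul_le_mul_of_nonneg_left hx (by positivity)) (abs_nonneg _)
    _ = |ω| * 2 ^ l * π / 2 ^ (L + 1) := by ring
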